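/- Fix u ∈ X and for each λ ∈ ℝ let D_λ : X → A denote the Fréchet derivative of U(·,λ) at u, and let U_λ(u,λ) := ∂U/∂λ. Suppose ρ₀ ∈ X and W₀ : ℝ → A satisfy the initial nonisospectral equation (E W₀(λ))·U(u,λ) − U(u,λ)·W₀(λ) = D_λ(ρ₀) + λ·U_λ(u,λ) for all λ, and suppose Ω : X × ℝ → A solves the characteristic operator equation (E Ω(ξ,λ))·U(u,λ) − U(u,λ)·Ω(ξ,λ) = D_λ(Φ ξ) − λ·D_λ(ξ) for all ξ ∈ X and all λ. Define ρ_l := Φˡ ρ₀ and W_l(λ) := λˡ·W₀(λ) + Σ_{j=1}^{l} λ^{l−j}·Ω(ρ_{j−1}, λ). Then for every l ≥ 0 and every λ: (E W_l(λ))·U(u,λ) − U(u,λ)·W_l(λ) = D_λ(ρ_l) + λ^{l+1}·U_λ(u,λ); i.e. each W_l is a nonisospectral (λ_t = λ^{l+1}) Lax operator for the flow u_t = ρ_l. -/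

import Mathlib

/-!
With `L W := (E W) U − U W`, which is linear in `W`, the operators satisfy
`W_{l+1} = λ W_l + Ω(ρ_l, λ)`. Hence
`L W_{l+1} = λ (D ρ_l + λ^{l+1} U_λ) + D(Φ ρ_l) − λ D ρ_l = D ρ_{l+1} + λ^{l+2} U_λ`:
the characteristic operator equation cancels the `λ D ρ_l` term and the induction closes.
-/

open Finset

section Telescoping

variable {R M N : Type*} [Semiring R] [AddCommMonoid M] [Module R M]
  [AddCommGroup N] [Module R N]

def hierarchyOperator (c : R) (W₀ : M) (ω : ℕ → M) (l : ℕ) : M :=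
  c ^ l • W₀ + ∑ j ∈ range l, c ^ (l - 1 - j) • ω j

theorem hierarchyOperator_succ (c : R) (W₀ : M) (ω : ℕ → M) (l : ℕ) :
    hierarchyOperator c W₀ ω (l + 1) = c • hierarchyOperator c W₀ ω l + ω l := by
  have hsum : ∀ j ∈ range l, c ^ (l + 1 - 1 - j) • ω j = c • c ^ (l - 1 - j) • ω j := by
    intro j hj
    have hj : j < l := mem_range.mp hj
    rw [smul_smul, ← pow_succ']
    congr 2
    omega
  rw [hierarchyOperator, sum_range_succ, sum_congr rfl hsum, ← smul_sum, pow_succ', mul_smul,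
    hierarchyOperator, smul_add, Nat.add_sub_cancel, Nat.sub_self, pow_zero, one_smul, add_assoc]

theorem map_hierarchyOperator (L : M →ₗ[R] N) (c : R) (W₀ : M) (ω : ℕ → M) (d : ℕ → N)
    (V : N) (hW₀ : L W₀ = d 0 + c • V) (hω : ∀ j, L (ω j) = d (j + 1) - c • d j) (l : ℕ) :
    L (hierarchyOperator c W₀ ω l) = d l + c ^ (l + 1) • V := by
  induction l with
  | zero => simpa [hierarchyOperator] using hW₀
  | succ l ih =>
    rw [hierarchyOperator_succ, map_add, map_smul, ih, hω, smul_add, smul_smul, ← pow_succ']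
    abel

end Telescoping

def twistedCommutator {R A : Type*} [CommSemiring R] [Ring A] [Algebra R A] (E : A →ₗ[R] A)
    (U : A) : A →ₗ[R] A :=
  LinearMap.mulRight R U ∘ₗ E - LinearMap.mulLeft R U

theorem nonisospectral_hierarchy_lax_operators_general
    {X A : Type*} [NormedAddCommGroup X] [NormedSpace ℝ X]
    [NormedRing A] [NormedAlgebra ℝ A]
    (E : A →ₐ[ℝ] A)
    (U : X × ℝ → A) (Φ : X →ₗ[ℝ] X) (u : X)
    (ρ₀ : X) (W₀ : ℝ → A) (Ω : X × ℝ → A)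
    -- initial nonisospectral (λ_t = λ) equation:
    -- (E W₀(λ))U(u,λ) − U(u,λ)W₀(λ) = D_λ(ρ₀) + λ·U_λ(u,λ)
    (hW₀ : ∀ l : ℝ,
      E (W₀ l) * U (u, l) - U (u, l) * W₀ l
        = fderiv ℝ (fun x => U (x, l)) u ρ₀
          + l • deriv (fun m => U (u, m)) l)
    -- characteristic operator equation:
    -- (E Ω(ξ,λ))U(u,λ) − U(u,λ)Ω(ξ,λ) = D_λ(Φξ) − λ·D_λ(ξ)
    (hΩ : ∀ (ξ : X) (l : ℝ),
      E (Ω (ξ, l)) * U (u, l) - U (u, l) * Ω (ξ, l)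
        = fderiv ℝ (fun x => U (x, l)) u (Φ ξ)
          - l • fderiv ℝ (fun x => U (x, l)) u ξ) :
    -- conclusion: (E W_l)U − U W_l = D_λ(ρ_l) + λ^{l+1}·U_λ for all l ≥ 0
    ∀ (l : ℕ) (lam : ℝ),
      E (lam ^ l • W₀ lam
            + ∑ j ∈ Finset.range l, lam ^ (l - 1 - j) • Ω ((Φ ^ j) ρ₀, lam)) * U (u, lam)
        - U (u, lam) * (lam ^ l • W₀ lam
            + ∑ j ∈ Finset.range l, lam ^ (l - 1 - j) • Ω ((Φ ^ j) ρ₀, lam))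
        = fderiv ℝ (fun x => U (x, lam)) u ((Φ ^ l) ρ₀)
          + lam ^ (l + 1) • deriv (fun m => U (u, m)) lam := by
  intro l lam
  have hΩ_iter : ∀ j, E (Ω ((Φ ^ j) ρ₀, lam)) * U (u, lam) - U (u, lam) * Ω ((Φ ^ j) ρ₀, lam)
      = fderiv ℝ (fun x => U (x, lam)) u ((Φ ^ (j + 1)) ρ₀)
        - lam • fderiv ℝ (fun x => U (x, lam)) u ((Φ ^ j) ρ₀) := by
    intro j
    rw [pow_succ', Module.End.mul_apply, hΩ]
  -- the goal is this conclusion with `twistedCommutator` and `hierarchyOperator` unfolded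
  exact map_hierarchyOperator (twistedCommutator E.toLinearMap (U (u, lam))) lam (W₀ lam)
    (fun j => Ω ((Φ ^ j) ρ₀, lam)) (fun j => fderiv ℝ (fun x => U (x, lam)) u ((Φ ^ j) ρ₀)) _
    (hW₀ lam) hΩ_iter l

theorem nonisospectral_hierarchy_lax_operators
    {X A : Type*} [NormedAddCommGroup X] [NormedSpace ℝ X]
    [NormedRing A] [NormedAlgebra ℝ A]
    (E : A →ₐ[ℝ] A) (hE : Continuous E)
    (U : X × ℝ → A) (Φ : X →ₗ[ℝ] X) (u : X)
    (hU : ∀ l : ℝ, ContDiff ℝ 1 (fun x => U (x, l)))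
    (hUl : Differentiable ℝ (fun m : ℝ => U (u, m)))
    (ρ₀ : X) (W₀ : ℝ → A) (Ω : X × ℝ → A)
    -- initial nonisospectral (λ_t = λ) equation:
    -- (E W₀(λ))U(u,λ) − U(u,λ)W₀(λ) = D_λ(ρ₀) + λ·U_λ(u,λ)
    (hW₀ : ∀ l : ℝ,
      E (W₀ l) * U (u, l) - U (u, l) * W₀ l
        = fderiv ℝ (fun x => U (x, l)) u ρ₀
          + l • deriv (fun m => U (u, m)) l)
    -- characteristic operator equation:
    -- (E Ω(ξ,λ))U(u,λ) − U(u,λ)Ω(ξ,λ) = D_λ(Φξ) − λ·D_λ(ξ)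
    (hΩ : ∀ (ξ : X) (l : ℝ),
      E (Ω (ξ, l)) * U (u, l) - U (u, l) * Ω (ξ, l)
        = fderiv ℝ (fun x => U (x, l)) u (Φ ξ)
          - l • fderiv ℝ (fun x => U (x, l)) u ξ) :
    -- conclusion: (E W_l)U − U W_l = D_λ(ρ_l) + λ^{l+1}·U_λ for all l ≥ 0
    ∀ (l : ℕ) (lam : ℝ),
      E (lam ^ l • W₀ lam
            + ∑ j ∈ Finset.range l, lam ^ (l - 1 - j) • Ω ((Φ ^ j) ρ₀, lam)) * U (u, lam)
        - U (u, lam) * (lam ^ l • W₀ lam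
            + ∑ j ∈ Finset.range l, lam ^ (l - 1 - j) • Ω ((Φ ^ j) ρ₀, lam))
        = fderiv ℝ (fun x => U (x, lam)) u ((Φ ^ l) ρ₀)
          + lam ^ (l + 1) • deriv (fun m => U (u, m)) lam :=
  nonisospectral_hierarchy_lax_operators_general E U Φ u ρ₀ W₀ Ω hW₀ hΩ
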